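/- Let 𝑴 be a real symmetric positive definite M×M matrix with unique symmetric positive definite square root 𝑴^{1/2} and 𝑴^{−1/2} = (𝑴^{1/2})^{−1}, let 𝒜 be a real symmetric positive definite M×M matrix, and let U₀, F ∈ ℝ^M. Then there exists a constant C > 0, depending only on 𝑴, 𝒜, U₀ and F (in particular independent of n and τ), such that for every integer n ≥ 1 and every τ ∈ (0,1) with max{τ‖𝒜‖₂, ‖I − τ𝒜‖₂} < 1 and nτ ≤ 1, the following holds: let (U_k) be defined by U_0 = U₀ and U_k = 𝑴^{−1/2}(I + τ𝒜)^{−1}𝑴^{1/2}U_{k−1} + τ𝑴^{−1/2}(I + τ𝒜)^{−1}𝑴^{−1/2}F, let (Ũ_k) be defined by Ũ_0 = U₀ and Ũ_k = 𝑴^{−1/2}(I + τ𝒜)^{−1}𝑴^{1/2}Ũ_{k−1}, let U and Ũ be the M×(n+1) matrices with columns U_0, …, U_n and Ũ_0, …, Ũ_n, and set X = UᵀU, X̃ = ŨᵀŨ. Then ‖X − X̃‖_F² ≤ C n⁴ τ². -/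

import Mathlib

open Matrix Finset

/-- The spectral norm (operator 2-norm) of a real square matrix. -/
noncomputable def spec {M : ℕ} (A : Matrix (Fin M) (Fin M) ℝ) : ℝ :=
  ‖LinearMap.toContinuousLinearMap (Matrix.toEuclideanLin A)‖

/-- The squared Frobenius norm of a real matrix. -/
noncomputable def frobSq {m l : ℕ} (A : Matrix (Fin m) (Fin l) ℝ) : ℝ :=
  ∑ i, ∑ j, (A i j) ^ 2

/-- The squared Euclidean norm of a real vector. -/
noncomputable def vecNormSq {M : ℕ} (x : Fin M → ℝ) : ℝ := ∑ i, (x i) ^ 2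

/-- The Euclidean norm of a real vector. -/
noncomputable def vecNorm {M : ℕ} (x : Fin M → ℝ) : ℝ := Real.sqrt (∑ i, (x i) ^ 2)

/-- The M×(n+1) matrix whose columns are the vectors `v 0, …, v n`. -/
noncomputable def colMat {M n : ℕ} (v : Fin (n + 1) → Fin M → ℝ) :
    Matrix (Fin M) (Fin (n + 1)) ℝ :=
  Matrix.of fun i k => v k i

/-!
Write `P = (I + τ𝒜)⁻¹`. Since `τ𝒜` is positive semidefinite, `‖x‖ ≤ ‖(I + τ𝒜) x‖`, so `P` is a
contraction, and the iteration matrix `𝑴^{-1/2} P 𝑴^{1/2}` is similar to it: all of its powers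
have norm at most `K = ‖𝑴^{-1/2}‖ ‖𝑴^{1/2}‖`. Hence the homogeneous iterates stay bounded by
`K ‖U₀‖`, while the difference of the two iterations is a sum of `k` powers applied to the source
increment, of size `O(τ)`, so it is `O(kτ) = O(nτ)` with `nτ ≤ 1`. Every entry of `UᵀU - ŨᵀŨ` is
therefore `O(nτ)`, and summing the `(n + 1)²` squared entries gives `O(n⁴τ²)`.
-/

open scoped InnerProductSpace ComplexOrder

namespace ContinuousLinearMap

variable {𝕜 E : Type*} [RCLike 𝕜] [NormedAddCommGroup E] [InnerProductSpace 𝕜 E]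

theorem norm_le_norm_add_apply_of_isPositive {T : E →L[𝕜] E} (hT : T.IsPositive) (x : E) :
    ‖x‖ ≤ ‖x + T x‖ := by
  have key : ‖x‖ ^ 2 ≤ ‖x‖ * ‖x + T x‖ := calc
    ‖x‖ ^ 2 = RCLike.re ⟪x, x⟫_𝕜 := by rw [inner_self_eq_norm_sq]
    _ ≤ RCLike.re ⟪x, x + T x⟫_𝕜 := by
      rw [inner_add_right, map_add]; linarith [hT.re_inner_nonneg_right x]
    _ ≤ ‖x‖ * ‖x + T x‖ := re_inner_le_norm _ _
  rcases (norm_nonneg x).eq_or_lt with hx | hx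
  · rw [← hx]; exact norm_nonneg _
  · nlinarith

theorem norm_le_one_of_one_add_mul_eq_one {T P : E →L[𝕜] E} (hT : T.IsPositive)
    (hP : (1 + T) * P = 1) : ‖P‖ ≤ 1 := by
  refine opNorm_le_bound _ zero_le_one fun y => ?_
  calc ‖P y‖ ≤ ‖P y + T (P y)‖ := norm_le_norm_add_apply_of_isPositive hT _
    _ = ‖((1 + T) * P) y‖ := rfl
    _ = ‖y‖ := by rw [hP]; rfl
    _ = 1 * ‖y‖ := (one_mul _).symm

end ContinuousLinearMap

theorem Matrix.norm_toEuclideanCLM_inv_one_add_le_one {𝕜 n : Type*} [RCLike 𝕜] [Fintype n]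
    [DecidableEq n] {B : Matrix n n 𝕜} (hB : B.PosSemidef) :
    ‖toEuclideanCLM (𝕜 := 𝕜) (n := n) (1 + B)⁻¹‖ ≤ 1 := by
  have hdet : IsUnit (1 + B).det := ((PosDef.one.add_posSemidef hB).isUnit).map detMonoidHom
  refine ContinuousLinearMap.norm_le_one_of_one_add_mul_eq_one
    (T := toEuclideanCLM (𝕜 := 𝕜) B) (isPositive_toEuclideanLin_iff.mpr hB) ?_
  rw [← map_one (toEuclideanCLM (𝕜 := 𝕜) (n := n)), ← map_add, ← map_mul, mul_nonsing_inv _ hdet]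

theorem Units.norm_conj_pow_le {R : Type*} [NormedRing R] (u : Rˣ) {p : R} (hp : ‖p‖ ≤ 1)
    (j : ℕ) : ‖(↑u⁻¹ * p * ↑u) ^ j‖ ≤ ‖(↑u⁻¹ : R)‖ * ‖(u : R)‖ := by
  rcases j.eq_zero_or_pos with rfl | hj
  · rw [pow_zero, ← u.inv_mul]; exact norm_mul_le _ _
  · rw [u.conj_pow']
    calc ‖↑u⁻¹ * p ^ j * ↑u‖ ≤ ‖(↑u⁻¹ : R)‖ * ‖p ^ j‖ * ‖(u : R)‖ := norm_mul₃_le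
      _ ≤ ‖(↑u⁻¹ : R)‖ * 1 * ‖(u : R)‖ := by
        gcongr
        exact (norm_pow_le' p hj).trans (pow_le_one₀ (norm_nonneg p) hp)
      _ = _ := by rw [mul_one]

section PowerBounded

variable {𝕜 E : Type*} [NontriviallyNormedField 𝕜] [NormedAddCommGroup E] [NormedSpace 𝕜 E]
  {B : E →L[𝕜] E} {K : ℝ}

theorem norm_iterate_le_of_powerBounded (hB : ∀ j, ‖B ^ j‖ ≤ K) {v : ℕ → E}
    (hv : ∀ k, v (k + 1) = B (v k)) (k : ℕ) : ‖v k‖ ≤ K * ‖v 0‖ := by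
  have hpow : v k = (B ^ k) (v 0) := by
    induction k with
    | zero => rfl
    | succ k ih => rw [hv, ih, pow_succ', mul_apply_eq_comp]
  rw [hpow]
  exact (B ^ k).le_of_opNorm_le (hB k) _

theorem norm_sub_iterate_le_of_powerBounded (hB : ∀ j, ‖B ^ j‖ ≤ K) {u v : ℕ → E} {f : E}
    (hu : ∀ k, u (k + 1) = B (u k) + f) (hv : ∀ k, v (k + 1) = B (v k)) (h0 : u 0 = v 0)
    (k : ℕ) : ‖u k - v k‖ ≤ k * (K * ‖f‖) := by
  have hsum : u k - v k = ∑ j ∈ range k, (B ^ j) f := by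
    induction k with
    | zero => simp [h0]
    | succ k ih =>
      simp_rw [hu, hv, sum_range_succ', pow_succ', mul_apply_eq_comp, ← map_sum,
        ← ih, map_sub, pow_zero, one_apply_eq_self]
      abel
  calc ‖u k - v k‖ ≤ ∑ j ∈ range k, ‖(B ^ j) f‖ := hsum ▸ norm_sum_le _ _
    _ ≤ ∑ _j ∈ range k, K * ‖f‖ := sum_le_sum fun j _ => (B ^ j).le_of_opNorm_le (hB j) f
    _ = k * (K * ‖f‖) := by rw [sum_const, card_range, nsmul_eq_mul]

end PowerBounded

theorem abs_inner_sub_inner_le {E : Type*} [NormedAddCommGroup E] [InnerProductSpace ℝ E]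
    {u u' v v' : E} {a δ : ℝ} (hv : ‖v‖ ≤ a) (hv' : ‖v'‖ ≤ a) (hu : ‖u - v‖ ≤ δ)
    (hu' : ‖u' - v'‖ ≤ δ) : |⟪u, u'⟫_ℝ - ⟪v, v'⟫_ℝ| ≤ δ * (2 * a + δ) := by
  have hδ : 0 ≤ δ := (norm_nonneg _).trans hu
  have hu'a : ‖u'‖ ≤ a + δ := by
    calc ‖u'‖ = ‖v' + (u' - v')‖ := by rw [add_sub_cancel]
      _ ≤ a + δ := (norm_add_le _ _).trans (add_le_add hv' hu')
  have hsplit : ⟪u, u'⟫_ℝ - ⟪v, v'⟫_ℝ = ⟪u - v, u'⟫_ℝ + ⟪v, u' - v'⟫_ℝ := by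
    rw [inner_sub_left, inner_sub_right]; ring
  calc |⟪u, u'⟫_ℝ - ⟪v, v'⟫_ℝ| ≤ ‖u - v‖ * ‖u'‖ + ‖v‖ * ‖u' - v'‖ := by
        rw [hsplit]
        exact (abs_add_le _ _).trans (add_le_add (abs_real_inner_le_norm _ _)
          (abs_real_inner_le_norm _ _))
    _ ≤ δ * (a + δ) + a * δ := by gcongr; exact (norm_nonneg _).trans hv
    _ = δ * (2 * a + δ) := by ring

theorem frobSq_le_of_abs_le {m l : ℕ} {A : Matrix (Fin m) (Fin l) ℝ} {ε : ℝ}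
    (hA : ∀ i j, |A i j| ≤ ε) : frobSq A ≤ m * l * ε ^ 2 := by
  calc frobSq A ≤ ∑ _i : Fin m, ∑ _j : Fin l, ε ^ 2 :=
        sum_le_sum fun i _ => sum_le_sum fun j _ => sq_le_sq' (abs_le.mp (hA i j)).1
          (abs_le.mp (hA i j)).2
    _ = m * l * ε ^ 2 := by simp [mul_assoc]

theorem colMat_transpose_mul_colMat_apply {M n : ℕ} (v w : Fin (n + 1) → Fin M → ℝ)
    (k l : Fin (n + 1)) : ((colMat v)ᵀ * colMat w) k l = v k ⬝ᵥ w l := rfl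

theorem frobSq_gram_sub_le {M n : ℕ} {U V : ℕ → Fin M → ℝ} {a δ : ℝ}
    (hV : ∀ k, ‖WithLp.toLp 2 (V k)‖ ≤ a)
    (hUV : ∀ k ≤ n, ‖WithLp.toLp 2 (U k) - WithLp.toLp 2 (V k)‖ ≤ δ) :
    frobSq ((colMat fun k : Fin (n + 1) => U k)ᵀ * (colMat fun k : Fin (n + 1) => U k) -
        (colMat fun k : Fin (n + 1) => V k)ᵀ * (colMat fun k : Fin (n + 1) => V k)) ≤
      (n + 1) ^ 2 * (δ * (2 * a + δ)) ^ 2 := by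
  have hdot (x y : Fin M → ℝ) : x ⬝ᵥ y = ⟪WithLp.toLp 2 x, WithLp.toLp 2 y⟫_ℝ := by
    rw [EuclideanSpace.inner_toLp_toLp, star_trivial, dotProduct_comm]
  refine (frobSq_le_of_abs_le (ε := δ * (2 * a + δ)) fun k l => ?_).trans_eq (by push_cast; ring)
  rw [Matrix.sub_apply, colMat_transpose_mul_colMat_apply, colMat_transpose_mul_colMat_apply,
    hdot, hdot]
  exact abs_inner_sub_inner_le (hV k) (hV l) (hUV k k.is_le) (hUV l l.is_le)

theorem Matrix.norm_toEuclideanCLM_conj_pow_le {𝕜 n : Type*} [RCLike 𝕜] [Fintype n]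
    [DecidableEq n] {S P : Matrix n n 𝕜} (hS : IsUnit S.det)
    (hP : ‖toEuclideanCLM (𝕜 := 𝕜) (n := n) P‖ ≤ 1) (j : ℕ) :
    ‖toEuclideanCLM (𝕜 := 𝕜) (n := n) (S⁻¹ * P * S) ^ j‖ ≤
      ‖toEuclideanCLM (𝕜 := 𝕜) (n := n) S⁻¹‖ * ‖toEuclideanCLM (𝕜 := 𝕜) (n := n) S‖ := by
  let Φ := toEuclideanCLM (𝕜 := 𝕜) (n := n)
  let u : (EuclideanSpace 𝕜 n →L[𝕜] EuclideanSpace 𝕜 n)ˣ :=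
    ⟨Φ S, Φ S⁻¹, by rw [← map_mul, mul_nonsing_inv _ hS, map_one],
      by rw [← map_mul, nonsing_inv_mul _ hS, map_one]⟩
  rw [map_mul, map_mul]
  exact u.norm_conj_pow_le hP j

theorem frobSq_gram_sub_le_of_powerBounded {M n : ℕ} {B : Matrix (Fin M) (Fin M) ℝ}
    {K τ γ : ℝ} (hB : ∀ j, ‖toEuclideanCLM (𝕜 := ℝ) (n := Fin M) B ^ j‖ ≤ K)
    {c : Fin M → ℝ} (hc : ‖WithLp.toLp 2 c‖ ≤ τ * γ) (hn : 1 ≤ n) (hτ : 0 < τ)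
    (hnτ : n * τ ≤ 1) {U V : ℕ → Fin M → ℝ} (hU : ∀ k, 1 ≤ k → U k = B *ᵥ U (k - 1) + c)
    (hV : ∀ k, 1 ≤ k → V k = B *ᵥ V (k - 1)) (h0 : U 0 = V 0) :
    frobSq ((colMat fun k : Fin (n + 1) => U k)ᵀ * (colMat fun k : Fin (n + 1) => U k) -
        (colMat fun k : Fin (n + 1) => V k)ᵀ * (colMat fun k : Fin (n + 1) => V k)) ≤
      4 * (K * γ * (2 * (K * ‖WithLp.toLp 2 (V 0)‖) + K * γ)) ^ 2 * n ^ 4 * τ ^ 2 := by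
  set a := K * ‖WithLp.toLp 2 (V 0)‖
  set δ := n * (K * (τ * γ))
  have hK : 0 ≤ K := (norm_nonneg _).trans (hB 0)
  have hγ : 0 ≤ γ := (mul_nonneg_iff_of_pos_left hτ).mp ((norm_nonneg _).trans hc)
  have hUrec (k : ℕ) : WithLp.toLp 2 (U (k + 1)) =
      toEuclideanCLM (𝕜 := ℝ) B (WithLp.toLp 2 (U k)) + WithLp.toLp 2 c := by
    rw [hU (k + 1) k.succ_pos, Nat.add_sub_cancel]; rfl
  have hVrec (k : ℕ) : WithLp.toLp 2 (V (k + 1)) =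
      toEuclideanCLM (𝕜 := ℝ) B (WithLp.toLp 2 (V k)) := by
    rw [hV (k + 1) k.succ_pos, Nat.add_sub_cancel]; rfl
  have hgram := frobSq_gram_sub_le (n := n) (a := a) (δ := δ)
    (norm_iterate_le_of_powerBounded hB (v := fun k => WithLp.toLp 2 (V k)) hVrec)
    fun k hk => calc
      _ ≤ k * (K * ‖WithLp.toLp 2 c‖) := norm_sub_iterate_le_of_powerBounded hB
          (u := fun k => WithLp.toLp 2 (U k)) (v := fun k => WithLp.toLp 2 (V k)) hUrec hVrec
          (by rw [h0]) k
      _ ≤ δ := by dsimp only [δ]; gcongr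
  have hδ : δ * (2 * a + δ) ≤ n * τ * (K * γ * (2 * a + K * γ)) := by
    have hδKγ : δ ≤ K * γ := calc
      δ = n * τ * (K * γ) := by ring
      _ ≤ K * γ := mul_le_of_le_one_left (by positivity) hnτ
    calc δ * (2 * a + δ) ≤ δ * (2 * a + K * γ) := by gcongr
      _ = n * τ * (K * γ * (2 * a + K * γ)) := by ring
  have hn4 : ((n : ℝ) + 1) ^ 2 ≤ 4 * n ^ 2 := by
    have : (1 : ℝ) ≤ n := by exact_mod_cast hn
    nlinarith
  calc _ ≤ ((n : ℝ) + 1) ^ 2 * (δ * (2 * a + δ)) ^ 2 := hgram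
    _ ≤ 4 * n ^ 2 * (n * τ * (K * γ * (2 * a + K * γ))) ^ 2 := by gcongr
    _ = _ := by ring

theorem source_vs_homogeneous_general {M : ℕ} (Msq A : Matrix (Fin M) (Fin M) ℝ)
    (hMsq : Msq.PosDef) (hA : A.PosDef) (U₀ F : Fin M → ℝ) :
    ∃ C > 0, ∀ n : ℕ, 1 ≤ n → ∀ τ : ℝ, 0 < τ → τ < 1 →
      τ * spec A < 1 → spec (1 - τ • A) < 1 → (n : ℝ) * τ ≤ 1 →
      ∀ U Ut : ℕ → Fin M → ℝ, U 0 = U₀ → Ut 0 = U₀ →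
        (∀ k : ℕ, 1 ≤ k → U k = (Msq⁻¹ * (1 + τ • A)⁻¹ * Msq).mulVec (U (k - 1)) +
          τ • (Msq⁻¹ * (1 + τ • A)⁻¹ * Msq⁻¹).mulVec F) →
        (∀ k : ℕ, 1 ≤ k → Ut k = (Msq⁻¹ * (1 + τ • A)⁻¹ * Msq).mulVec (Ut (k - 1))) →
        frobSq ((colMat fun k : Fin (n + 1) => U (k : ℕ))ᵀ *
            (colMat fun k : Fin (n + 1) => U (k : ℕ)) -
            (colMat fun k : Fin (n + 1) => Ut (k : ℕ))ᵀ *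
            (colMat fun k : Fin (n + 1) => Ut (k : ℕ))) ≤
          C * (n : ℝ) ^ 4 * τ ^ 2 := by
  let Φ := toEuclideanCLM (𝕜 := ℝ) (n := Fin M)
  set K := ‖Φ Msq⁻¹‖ * ‖Φ Msq‖
  set γ := ‖Φ Msq⁻¹‖ ^ 2 * ‖WithLp.toLp 2 F‖
  set E := K * γ * (2 * (K * ‖WithLp.toLp 2 U₀‖) + K * γ)
  refine ⟨4 * E ^ 2 + 1, by positivity, fun n hn τ hτ _ _ _ hnτ U Ut hU0 hUt0 hU hUt => ?_⟩
  have hP : ‖Φ (1 + τ • A)⁻¹‖ ≤ 1 :=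
    norm_toEuclideanCLM_inv_one_add_le_one (hA.posSemidef.smul hτ.le)
  have hc : ‖WithLp.toLp 2 (τ • (Msq⁻¹ * (1 + τ • A)⁻¹ * Msq⁻¹) *ᵥ F)‖ ≤ τ * γ := calc
    _ ≤ τ * (‖Φ Msq⁻¹‖ * ‖Φ (1 + τ • A)⁻¹‖ * ‖Φ Msq⁻¹‖ * ‖WithLp.toLp 2 F‖) := by
      rw [WithLp.toLp_smul, norm_smul, Real.norm_of_nonneg hτ.le, ← toEuclideanCLM_toLp]
      gcongr
      exact (ContinuousLinearMap.le_opNorm _ _).trans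
        (by rw [map_mul, map_mul]; gcongr; exact norm_mul₃_le)
    _ ≤ τ * (‖Φ Msq⁻¹‖ * 1 * ‖Φ Msq⁻¹‖ * ‖WithLp.toLp 2 F‖) := by gcongr
    _ = τ * γ := by ring
  calc _ ≤ 4 * E ^ 2 * n ^ 4 * τ ^ 2 := by
        simpa only [hUt0] using frobSq_gram_sub_le_of_powerBounded
          (norm_toEuclideanCLM_conj_pow_le (hMsq.isUnit.map detMonoidHom) hP) hc hn hτ hnτ
          hU hUt (hU0.trans hUt0.symm)
    _ ≤ (4 * E ^ 2 + 1) * n ^ 4 * τ ^ 2 := by gcongr; linarith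

/-- There is a constant `C > 0`, independent of `n` and `τ`, such that for all
`n ≥ 1` and `τ ∈ (0,1)` with `max{τ‖𝒜‖₂, ‖I - τ𝒜‖₂} < 1` and `nτ ≤ 1`,
`‖X - X̃‖_F² ≤ C n⁴ τ²`, where `X = UᵀU` for the backward Euler iterates with
source term `F` and `X̃ = ŨᵀŨ` for the homogeneous (`F = 0`) iterates. -/
theorem source_vs_homogeneous {M : ℕ} (Mmat Msq A : Matrix (Fin M) (Fin M) ℝ)
    (hM : Mmat.PosDef) (hMsq : Msq.PosDef) (hsq : Msq * Msq = Mmat)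
    (hA : A.PosDef) (U₀ F : Fin M → ℝ) :
    ∃ C > 0, ∀ n : ℕ, 1 ≤ n → ∀ τ : ℝ, 0 < τ → τ < 1 →
      τ * spec A < 1 → spec (1 - τ • A) < 1 → (n : ℝ) * τ ≤ 1 →
      ∀ U Ut : ℕ → Fin M → ℝ, U 0 = U₀ → Ut 0 = U₀ →
        (∀ k : ℕ, 1 ≤ k → U k = (Msq⁻¹ * (1 + τ • A)⁻¹ * Msq).mulVec (U (k - 1)) +
          τ • (Msq⁻¹ * (1 + τ • A)⁻¹ * Msq⁻¹).mulVec F) →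
        (∀ k : ℕ, 1 ≤ k → Ut k = (Msq⁻¹ * (1 + τ • A)⁻¹ * Msq).mulVec (Ut (k - 1))) →
        frobSq ((colMat fun k : Fin (n + 1) => U (k : ℕ))ᵀ *
            (colMat fun k : Fin (n + 1) => U (k : ℕ)) -
            (colMat fun k : Fin (n + 1) => Ut (k : ℕ))ᵀ *
            (colMat fun k : Fin (n + 1) => Ut (k : ℕ))) ≤
          C * (n : ℝ) ^ 4 * τ ^ 2 :=
  source_vs_homogeneous_general Msq A hMsq hA U₀ F
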